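/- Let q be a prime power and let X be the set of closed points of the projective line over F_q, where each closed point x has a degree d_x ≥ 1, and the number of closed points of degree d is Ψ(d) with Σ_{d|n} d·Ψ(d) = q^n + 1 for all n ≥ 1 (here the point at infinity contributes one point of degree 1 beyond the affine irreducible polynomials). Then for every a ≥ 1, the sum over all finitely supported functions n: X → ℕ with Σ_x d_x·n_x = a of the product over x with n_x ≥ 1 of (q^{d_x·n_x} - q^{d_x·n_x - d_x}) equals q^{2a} - q^{2a-2}. -/

import Mathlib

/-!
The sum is the coefficient of `t^a` in `∏ₓ (1 - t^{dₓ}) / (1 - (q t)^{dₓ})`, and only points of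
degree `≤ a` contribute, so the product may be taken over a finite set `T`. The point counts say
that `∏_{x ∈ T} (1 - t^{dₓ})` and `(1 - t)(1 - q t)` have the same logarithmic derivative up to
degree `a`, hence agree modulo `t^{a+1}` (the zeta function of `ℙ¹`). Substituting `t ↦ q t` in
the denominator, the generating function is `(1 - t) / (1 - q² t)` modulo `t^{a+1}`, whose `t^a`
coefficient is `q^{2a} - q^{2a-2}`.
-/

open Finset PowerSeries

namespace PowerSeries

section CommRing

variable {R : Type*} [CommRing R]

theorem X_pow_dvd_rescale {N : ℕ} {f : R⟦X⟧} (q : R) (hf : X ^ N ∣ f) : X ^ N ∣ rescale q f := by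
  obtain ⟨g, rfl⟩ := hf
  rw [map_mul, map_pow, rescale_X, mul_pow, mul_assoc]
  exact dvd_mul_of_dvd_right (dvd_mul_right _ _) _

theorem X_pow_dvd_sub_of_mul_rescale_eq {N : ℕ} {G H A P : R⟦X⟧} (q : R)
    (hA : IsUnit (constantCoeff A)) (hG : G * rescale q A = A) (hH : H * rescale q P = P)
    (hAP : X ^ N ∣ A - P) : X ^ N ∣ G - H := by
  have hunit : IsUnit (rescale q A) := by
    rwa [isUnit_iff_constantCoeff, ← coeff_zero_eq_constantCoeff_apply, coeff_rescale, pow_zero,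
      one_mul, coeff_zero_eq_constantCoeff_apply]
  rw [← hunit.dvd_mul_right]
  have hsplit : (G - H) * rescale q A = (A - P) - H * rescale q (A - P) := by
    rw [map_sub]; linear_combination hG - hH
  rw [hsplit]
  exact dvd_sub hAP (dvd_mul_of_dvd_right (X_pow_dvd_rescale q hAP) H)

-- the power series of `(1 - X) / (1 - v X)`
def localFactor (v : R) : R⟦X⟧ :=
  mk fun n => if n = 0 then 1 else v ^ n - v ^ (n - 1)

theorem coeff_localFactor_of_ne_zero (v : R) {n : ℕ} (hn : n ≠ 0) :
    coeff n (localFactor v) = v ^ n - v ^ (n - 1) := by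
  simp [localFactor, hn]

theorem constantCoeff_localFactor (v : R) : constantCoeff (localFactor v) = 1 := by
  simp [localFactor, ← coeff_zero_eq_constantCoeff_apply]

theorem localFactor_mul_one_sub_C_mul_X (v : R) : localFactor v * (1 - C v * X) = 1 - X := by
  ext (_ | _ | n)
  · simp [localFactor]
  · simp [localFactor, mul_sub, ← mul_assoc, mul_comm _ X]
  · simp [localFactor, mul_sub, ← mul_assoc, mul_comm _ X, coeff_X]
    ring

theorem expand_localFactor_mul_rescale_one_sub_X_pow (q : R) {e : ℕ} (he : e ≠ 0) :
    expand e he (localFactor (q ^ e)) * rescale q (1 - X ^ e) = 1 - X ^ e := by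
  have h := congrArg (expand e he) (localFactor_mul_one_sub_C_mul_X (q ^ e))
  simpa [rescale_X, mul_pow, expand_C] using h

end CommRing

section Field

variable {K : Type*} [Field K]

-- `X f' / f`: with the factor `X`, the `n`-th coefficient of `X h'` is `n` times that of `h`
noncomputable def logDerivX (f : K⟦X⟧) : K⟦X⟧ := X * d⁄dX K f * f⁻¹

theorem logDerivX_mul {f g : K⟦X⟧} (hf : constantCoeff f ≠ 0) (hg : constantCoeff g ≠ 0) :
    logDerivX (f * g) = logDerivX f + logDerivX g := by
  simp only [logDerivX, Derivation.leibniz, smul_eq_mul, PowerSeries.mul_inv_rev]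
  linear_combination (X * d⁄dX K f * f⁻¹) * (PowerSeries.mul_inv_cancel _ hg) +
    (X * d⁄dX K g * g⁻¹) * (PowerSeries.mul_inv_cancel _ hf)

theorem logDerivX_prod {ι : Type*} (s : Finset ι) (f : ι → K⟦X⟧)
    (hf : ∀ i ∈ s, constantCoeff (f i) ≠ 0) :
    logDerivX (∏ i ∈ s, f i) = ∑ i ∈ s, logDerivX (f i) := by
  classical
  induction s using Finset.induction_on with
  | empty => simp [logDerivX]
  | insert a s ha ih =>
    rw [prod_insert ha, sum_insert ha, logDerivX_mul (hf a (mem_insert_self a s)),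
      ih fun i hi => hf i (mem_insert_of_mem hi)]
    rw [map_prod]
    exact prod_ne_zero_iff.2 fun i hi => hf i (mem_insert_of_mem hi)

theorem constantCoeff_logDerivX (f : K⟦X⟧) : constantCoeff (logDerivX f) = 0 := by
  simp [logDerivX]

theorem inv_one_sub_C_mul_X_pow (c : K) {e : ℕ} (he : e ≠ 0) :
    (1 - C c * X ^ e)⁻¹ = expand e he (rescale c (mk 1)) := by
  symm
  rw [eq_inv_iff_mul_eq_one (by simp [he])]
  have h := congrArg (fun φ => expand e he (rescale c φ)) (mk_one_mul_one_sub_eq_one (S := K))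
  simpa [rescale_X, expand_C] using h

theorem logDerivX_one_sub_C_mul_X_pow (c : K) {e : ℕ} (he : e ≠ 0) :
    logDerivX (1 - C c * X ^ e) = (e : K⟦X⟧) * (1 - (1 - C c * X ^ e)⁻¹) := by
  have hψ : constantCoeff (1 - C c * X ^ e) ≠ 0 := by simp [he]
  have hX : X * d⁄dX K (1 - C c * X ^ e) = (e : K⟦X⟧) * ((1 - C c * X ^ e) - 1) := by
    rw [map_sub, derivative_one, Derivation.leibniz, derivative_pow, derivative_C, derivative_X]
    obtain ⟨k, rfl⟩ := Nat.exists_eq_succ_of_ne_zero he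
    simp
    ring
  rw [logDerivX, hX]
  linear_combination (e : K⟦X⟧) * PowerSeries.mul_inv_cancel _ hψ

theorem coeff_logDerivX_one_sub_C_mul_X_pow (c : K) {e n : ℕ} (he : e ≠ 0) (hn : n ≠ 0) :
    coeff n (logDerivX (1 - C c * X ^ e)) = -if e ∣ n then e * c ^ (n / e) else 0 := by
  rw [logDerivX_one_sub_C_mul_X_pow c he, inv_one_sub_C_mul_X_pow c he, ← map_natCast C,
    coeff_C_mul, map_sub, coeff_one, if_neg hn, coeff_expand]
  split_ifs <;> simp [coeff_rescale]

theorem X_mul_derivative_mul_inv {f : K⟦X⟧} (g : K⟦X⟧) (hf : constantCoeff f ≠ 0) :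
    X * d⁄dX K (f * g⁻¹) = (logDerivX f - logDerivX g) * (f * g⁻¹) := by
  simp only [logDerivX, Derivation.leibniz, smul_eq_mul, derivative_inv']
  linear_combination -(X * d⁄dX K f * g⁻¹) * PowerSeries.inv_mul_cancel _ hf

theorem X_pow_succ_dvd_sub_C_of_dvd_X_mul_derivative [CharZero K] {N : ℕ} {h : K⟦X⟧}
    (hdh : X ^ (N + 1) ∣ X * d⁄dX K h) : X ^ (N + 1) ∣ h - C (constantCoeff h) := by
  rw [X_pow_dvd_iff] at hdh ⊢
  rintro (_ | m) hm
  · simp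
  · have := hdh (m + 1) hm
    rw [coeff_succ_X_mul, coeff_derivative] at this
    simpa [Nat.cast_add_one_ne_zero] using this

theorem X_pow_succ_dvd_sub_of_dvd_logDerivX_sub [CharZero K] {N : ℕ} {f g : K⟦X⟧}
    (hfg : constantCoeff f = constantCoeff g) (hg : constantCoeff g ≠ 0)
    (h : X ^ (N + 1) ∣ logDerivX f - logDerivX g) : X ^ (N + 1) ∣ f - g := by
  have hquot : constantCoeff (f * g⁻¹) = 1 := by
    rw [map_mul, constantCoeff_inv, hfg, mul_inv_cancel₀ hg]
  have hquot_sub := X_pow_succ_dvd_sub_C_of_dvd_X_mul_derivative (N := N) (h := f * g⁻¹) (by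
    rw [X_mul_derivative_mul_inv g (hfg ▸ hg)]
    exact dvd_mul_of_dvd_left h _)
  rw [hquot, map_one] at hquot_sub
  have hfactor : f - g = (f * g⁻¹ - 1) * g := by
    linear_combination -f * PowerSeries.inv_mul_cancel _ hg
  rw [hfactor]
  exact dvd_mul_of_dvd_left hquot_sub g

theorem X_pow_succ_dvd_prod_one_sub_X_pow_sub [CharZero K] {ι : Type*} (T : Finset ι)
    (d : ι → ℕ) (hd : ∀ x ∈ T, d x ≠ 0) (c : K) (N : ℕ)
    (hcount : ∀ n, 1 ≤ n → n ≤ N → ∑ x ∈ T with d x ∣ n, (d x : K) = c ^ n + 1) :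
    X ^ (N + 1) ∣ ∏ x ∈ T, (1 - X ^ d x) - (1 - X) * (1 - C c * X) := by
  have hfactor : ∀ x ∈ T, constantCoeff (1 - X ^ d x : K⟦X⟧) ≠ 0 := fun x hx => by
    simp [hd x hx]
  refine X_pow_succ_dvd_sub_of_dvd_logDerivX_sub
    (by rw [map_prod, prod_eq_one fun x hx => by simp [hd x hx]]; simp) (by simp) ?_
  rw [logDerivX_prod T _ hfactor, logDerivX_mul (by simp) (by simp), X_pow_dvd_iff]
  rintro (_ | n) hn
  · simp [constantCoeff_logDerivX]
  have hpow {e : ℕ} (he : e ≠ 0) : coeff (n + 1) (logDerivX (1 - X ^ e : K⟦X⟧)) =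
      -if e ∣ n + 1 then (e : K) else 0 := by
    simpa using coeff_logDerivX_one_sub_C_mul_X_pow (1 : K) he n.succ_ne_zero
  have hlinear (r : K) : coeff (n + 1) (logDerivX (1 - C r * X)) = -r ^ (n + 1) := by
    simpa using coeff_logDerivX_one_sub_C_mul_X_pow r one_ne_zero n.succ_ne_zero
  have hone : coeff (n + 1) (logDerivX (1 - X : K⟦X⟧)) = -1 := by simpa using hlinear 1
  rw [map_sub, map_add, map_sum, sum_congr rfl fun x hx => hpow (hd x hx), sum_neg_distrib,
    ← sum_filter, hcount (n + 1) n.succ_pos (by omega), hlinear, hone]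
  ring

end Field

end PowerSeries

section

variable {ι : Type*} {d : ι → ℕ}

theorem Finsupp.support_pointwise_smul (hd : ∀ x, d x ≠ 0) (f : ι →₀ ℕ) :
    (d • f).support = f.support := by
  ext x
  simp [hd x]

theorem Finsupp.sum_support_mul_eq_sum_pointwise_smul {T : Finset ι} {f : ι →₀ ℕ}
    (hf : f.support ⊆ T) : ∑ x ∈ f.support, d x * f x = ∑ x ∈ T, (d • f) x := by
  refine sum_subset hf fun x _ hx => ?_
  rw [Finsupp.notMem_support_iff.mp hx, mul_zero]

theorem Finsupp.support_subset_of_sum_mul_eq {T : Finset ι} {a : ℕ}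
    (hT : ∀ x, d x ≤ a → x ∈ T) {f : ι →₀ ℕ} (hf : ∑ x ∈ f.support, d x * f x = a) :
    f.support ⊆ T := fun x hx => hT x <| by
  have hfx : f x ≠ 0 := Finsupp.mem_support_iff.mp hx
  calc d x ≤ d x * f x := Nat.le_mul_of_pos_right _ (Nat.pos_of_ne_zero hfx)
    _ ≤ a := hf ▸ Finset.single_le_sum (f := fun x => d x * f x) (fun _ _ => Nat.zero_le _) hx

theorem finsum_prod_coeff_eq_coeff_prod_expand {R : Type*} [CommRing R] (hd : ∀ x, d x ≠ 0)
    (φ : ι → R⟦X⟧) (hφ : ∀ x, constantCoeff (φ x) = 1) (T : Finset ι) (a : ℕ)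
    (hT : ∀ x, d x ≤ a → x ∈ T) :
    ∑ᶠ (f : ι →₀ ℕ) (_ : ∑ x ∈ f.support, d x * f x = a), ∏ x ∈ f.support, coeff (f x) (φ x) =
      coeff a (∏ x ∈ T, expand (d x) (hd x) (φ x)) := by
  classical
  set D := (finsuppAntidiag T a).filter fun l => ∀ x ∈ T, d x ∣ l x
  have hbij : Set.BijOn (d • ·) {f : ι →₀ ℕ | ∑ x ∈ f.support, d x * f x = a} D := by
    refine ⟨fun f hf => ?_, fun f _ g _ hfg => ?_, fun l hl => ?_⟩
    · have hsub := Finsupp.support_subset_of_sum_mul_eq hT hf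
      simp only [D, coe_filter, Set.mem_ofPred_eq, mem_finsuppAntidiag,
        Finsupp.support_pointwise_smul hd, ← Finsupp.sum_support_mul_eq_sum_pointwise_smul hsub]
      exact ⟨⟨hf, hsub⟩, fun x _ => dvd_mul_right _ _⟩
    · ext x
      exact Nat.eq_of_mul_eq_mul_left (Nat.pos_of_ne_zero (hd x)) (DFunLike.congr_fun hfg x)
    · simp only [D, coe_filter, Set.mem_ofPred_eq, mem_finsuppAntidiag] at hl
      obtain ⟨⟨hsum, hsub⟩, hdvd⟩ := hl
      set f : ι →₀ ℕ := Finsupp.onFinset l.support (fun x => l x / d x)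
        fun x hx => Finsupp.mem_support_iff.mpr fun h0 => hx (by simp [h0])
      have hdf : d • f = l := by
        ext x
        by_cases hx : x ∈ T
        · exact Nat.mul_div_cancel' (hdvd x hx)
        · simp [f, Finsupp.notMem_support_iff.mp fun h => hx (hsub h)]
      have hfsub : f.support ⊆ T := by
        rw [← Finsupp.support_pointwise_smul hd, hdf]; exact hsub
      refine ⟨f, ?_, hdf⟩
      rw [Set.mem_ofPred_eq, Finsupp.sum_support_mul_eq_sum_pointwise_smul hfsub, hdf, hsum]
  calc ∑ᶠ (f : ι →₀ ℕ) (_ : ∑ x ∈ f.support, d x * f x = a), ∏ x ∈ f.support, coeff (f x) (φ x)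
      = ∑ᶠ l ∈ (D : Set (ι →₀ ℕ)), ∏ x ∈ T, coeff (l x) (expand (d x) (hd x) (φ x)) := by
        refine finsum_mem_eq_of_bijOn _ hbij fun f hf => ?_
        refine prod_subset_one_on_sdiff (Finsupp.support_subset_of_sum_mul_eq hT hf) ?_ ?_
        · intro x hx
          rw [mem_sdiff, Finsupp.notMem_support_iff] at hx
          simp [hx.2, hφ]
        · intro x _
          simp
    _ = ∑ l ∈ finsuppAntidiag T a, ∏ x ∈ T, coeff (l x) (expand (d x) (hd x) (φ x)) := by
        rw [finsum_mem_coe_finset]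
        convert sum_filter_of_ne (p := fun l : ι →₀ ℕ => ∀ x ∈ T, d x ∣ l x) fun l _ hl x hx => ?_
        by_contra hndvd
        exact hl (prod_eq_zero hx (coeff_expand_of_not_dvd _ _ _ hndvd))
    _ = coeff a (∏ x ∈ T, expand (d x) (hd x) (φ x)) := (coeff_prod _ _ _).symm

end

theorem coeff_prod_expand_localFactor {K ι : Type*} [Field K] [CharZero K] (T : Finset ι)
    {d : ι → ℕ} (hd : ∀ x, d x ≠ 0) (q : K) {a : ℕ} (ha : a ≠ 0)
    (hcount : ∀ n, 1 ≤ n → n ≤ a → ∑ x ∈ T with d x ∣ n, (d x : K) = q ^ n + 1) :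
    coeff a (∏ x ∈ T, expand (d x) (hd x) (localFactor (q ^ d x))) =
      q ^ (2 * a) - q ^ (2 * a - 2) := by
  have hG : (∏ x ∈ T, expand (d x) (hd x) (localFactor (q ^ d x))) *
      rescale q (∏ x ∈ T, (1 - X ^ d x)) = ∏ x ∈ T, (1 - X ^ d x) := by
    rw [map_prod, ← prod_mul_distrib]
    exact prod_congr rfl fun x _ => expand_localFactor_mul_rescale_one_sub_X_pow q (hd x)
  have hH : localFactor (q ^ 2) * rescale q ((1 - X) * (1 - C q * X)) =
      (1 - X) * (1 - C q * X) := by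
    have hC : rescale q (C q) = C q := by
      ext (_ | n) <;> simp [coeff_rescale, coeff_C]
    have h := localFactor_mul_one_sub_C_mul_X (q ^ 2)
    rw [map_pow] at h
    rw [map_mul, map_sub, map_sub, map_one, map_mul, rescale_X, hC]
    linear_combination (1 - C q * X) * h
  have hdvd := X_pow_dvd_sub_of_mul_rescale_eq q (by simp [map_prod, hd]) hG hH
    (X_pow_succ_dvd_prod_one_sub_X_pow_sub T d (fun x _ => hd x) q a hcount)
  have hcoeff := (X_pow_dvd_iff.mp hdvd) a a.lt_succ_self
  rw [map_sub, sub_eq_zero] at hcoeff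
  rw [hcoeff, coeff_localFactor_of_ne_zero _ ha, ← pow_mul, ← pow_mul, Nat.mul_sub_one]

theorem sum_torsion_count_general (q : ℕ) (X : Type*) (d : X → ℕ) (hd : ∀ x, 1 ≤ d x)
    (hcount : ∀ n : ℕ, 1 ≤ n →
      ∃ s : Finset X, (∀ x, x ∈ s ↔ d x ∣ n) ∧ ∑ x ∈ s, d x = q ^ n + 1)
    (a : ℕ) (ha : 1 ≤ a) :
    (∑ᶠ (f : X →₀ ℕ) (_ : ∑ x ∈ f.support, d x * f x = a),
        ∏ x ∈ f.support, ((q : ℚ) ^ (d x * f x) - (q : ℚ) ^ (d x * f x - d x))) =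
      (q : ℚ) ^ (2 * a) - (q : ℚ) ^ (2 * a - 2) := by
  have hd₀ (x : X) : d x ≠ 0 := Nat.one_le_iff_ne_zero.mp (hd x)
  obtain ⟨T, hT, -⟩ := hcount a.factorial a.factorial_pos
  have hTdeg (x : X) (hx : d x ≤ a) : x ∈ T := (hT x).2 (Nat.dvd_factorial (hd x) hx)
  have hsum (n : ℕ) (hn : 1 ≤ n) (hna : n ≤ a) :
      ∑ x ∈ T with d x ∣ n, (d x : ℚ) = q ^ n + 1 := by
    obtain ⟨s, hs, hsum⟩ := hcount n hn
    have hfilter : T.filter (d · ∣ n) = s := by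
      ext x
      rw [mem_filter, hs, and_iff_right_iff_imp]
      exact fun hx => hTdeg x ((Nat.le_of_dvd hn hx).trans hna)
    rw [hfilter]
    exact_mod_cast hsum
  rw [← coeff_prod_expand_localFactor T hd₀ (q : ℚ) (Nat.one_le_iff_ne_zero.mp ha) hsum,
    ← finsum_prod_coeff_eq_coeff_prod_expand hd₀ _ (fun x => constantCoeff_localFactor _) T a hTdeg]
  refine finsum_congr fun f => finsum_congr fun _ => prod_congr rfl fun x hx => ?_
  rw [coeff_localFactor_of_ne_zero _ (Finsupp.mem_support_iff.mp hx), ← pow_mul, ← pow_mul,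
    Nat.mul_sub_one]

/-- Let `q` be a prime power and `X` an abstract set of "closed points of `ℙ¹` over `𝔽_q`",
each point `x` having a degree `d x ≥ 1`, such that for every `n ≥ 1` the set of points of
degree dividing `n` is finite with weighted count `∑_{d x ∣ n} d x = q^n + 1`.  Then for every
`a ≥ 1`,
`∑_{n : X →₀ ℕ, ∑ d x · n x = a} ∏_{n x ≥ 1} (q^{d x · n x} - q^{d x · n x - d x})
   = q^{2a} - q^{2a-2}`. -/
theorem sum_torsion_count (q : ℕ) (hq : IsPrimePow q)
    (X : Type*) (d : X → ℕ) (hd : ∀ x, 1 ≤ d x)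
    (hcount : ∀ n : ℕ, 1 ≤ n →
      ∃ s : Finset X, (∀ x, x ∈ s ↔ d x ∣ n) ∧ ∑ x ∈ s, d x = q ^ n + 1)
    (a : ℕ) (ha : 1 ≤ a) :
    (∑ᶠ (f : X →₀ ℕ) (_ : ∑ x ∈ f.support, d x * f x = a),
        ∏ x ∈ f.support, ((q : ℚ) ^ (d x * f x) - (q : ℚ) ^ (d x * f x - d x))) =
      (q : ℚ) ^ (2 * a) - (q : ℚ) ^ (2 * a - 2) :=
  sum_torsion_count_general q X d hd hcount a ha
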